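/- arXiv:2107.07172 — 6 statements merged into one kernel-verified Lean document; each statement's English description precedes it below -/
import Mathlib

section
/- The k-th smooth self-similar Burgers profile 𝔘 solves the steady self-similar Burgers equation: for every y ∈ ℝ, (1 - b)·𝔘(y) + (b·y + 𝔘(y))·𝔘'(y) = 0, where b = (2k+1)/(2k). -/
/-- Fix an integer `k ≥ 1`, a real `h₁ > 0`, and set `b = (2k+1)/(2k)`.
The `k`-th smooth self-similar Burgers profile `U`, i.e. the smooth, odd, strictly
decreasing inverse of `u ↦ -u - h₁ u^(2k+1)` (so `y = -U y - h₁ (U y)^(2k+1)` for all `y`),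
solves the steady self-similar Burgers equation:
`(1 - b)·U(y) + (b·y + U(y))·U'(y) = 0` for every `y ∈ ℝ`. -/
theorem burgers_profile_steady_equation (k : ℕ) (hk : 1 ≤ k) (h₁ : ℝ) (hh₁ : 0 < h₁)
    (U : ℝ → ℝ) (hsmooth : ContDiff ℝ (⊤ : ℕ∞) U) (hodd : ∀ y : ℝ, U (-y) = -U y)
    (hanti : StrictAnti U)
    (hinv : ∀ y : ℝ, y = -U y - h₁ * (U y) ^ (2 * k + 1)) :
    ∀ y : ℝ,
      (1 - (2 * (k : ℝ) + 1) / (2 * (k : ℝ))) * U y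
        + ((2 * (k : ℝ) + 1) / (2 * (k : ℝ)) * y + U y) * deriv U y = 0 := by
  intro y
  have hdU : HasDerivAt U (deriv U y) y :=
    ((hsmooth.differentiable (by simp)) y).hasDerivAt
  have hF : HasDerivAt (fun z => -U z - h₁ * (U z) ^ (2 * k + 1))
      (-(deriv U y) - h₁ * (((2 * k + 1 : ℕ) : ℝ) * (U y) ^ (2 * k) * deriv U y)) y := by
    have h1 : HasDerivAt (fun z => (U z) ^ (2 * k + 1))
        (((2 * k + 1 : ℕ) : ℝ) * (U y) ^ (2 * k + 1 - 1) * deriv U y) y := hdU.pow _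
    have := hdU.neg.sub (h1.const_mul h₁)
    simp only [Nat.add_sub_cancel] at this
    exact this
  have heq : (fun z => -U z - h₁ * (U z) ^ (2 * k + 1)) = fun z : ℝ => z := by
    funext z; exact (hinv z).symm
  rw [heq] at hF
  have hid : HasDerivAt (fun z : ℝ => z) 1 y := hasDerivAt_id y
  have hkey : -(deriv U y) - h₁ * (((2 * k + 1 : ℕ) : ℝ) * (U y) ^ (2 * k) * deriv U y) = 1 :=
    hF.unique hid
  have hy := hinv y
  have hk0 : (2 * (k : ℝ)) ≠ 0 := by
    have : (0:ℝ) < (k : ℝ) := by exact_mod_cast hk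
    positivity
  have hpow : (U y) ^ (2 * k + 1) = (U y) ^ (2 * k) * U y := by ring
  push_cast at hkey
  set u := U y with hu
  set d := deriv U y with hd
  rw [hy]
  field_simp
  linear_combination u * hkey
end

section
/- The k-th smooth self-similar Burgers profile 𝔘 satisfies: 𝔘(0) = 0, 𝔘'(0) = -1, the iterated derivatives ∂_y^j 𝔘(0) = 0 for every j with 2 ≤ j ≤ 2k and also for every j with 2k+2 ≤ j ≤ 4k, and ∂_y^{2k+1} 𝔘(0) = (2k+1)!·h₁. In particular, with the normalization h₁ = 1/(2k+1) one has ∂_y^{2k+1} 𝔘(0) = (2k)!, and there exist constants C > 0 and δ > 0 such that |𝔘(y) + y - y^{2k+1}/(2k+1)| ≤ C·|y|^{4k+1} for all |y| ≤ δ. -/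
open Set Finset

private lemma iDW_eq_iD {f : ℝ → ℝ} (hf : ContDiff ℝ (⊤ : ℕ∞) f) {s : Set ℝ} (hs : UniqueDiffOn ℝ s)
    (m : ℕ) : ∀ {x : ℝ}, x ∈ s → iteratedDerivWithin m f s x = iteratedDeriv m f x := by
  induction m with
  | zero => intro x _; simp
  | succ m IH =>
    intro x hx
    rw [iteratedDerivWithin_succ, iteratedDeriv_succ,
      derivWithin_congr (fun y hy => IH hy) (IH hx)]
    exact ((hf.differentiable_iteratedDeriv m (by exact_mod_cast (WithTop.coe_lt_coe.mpr (ENat.coe_lt_top m)))).differentiableAt).derivWithin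
      (hs.uniqueDiffWithinAt hx)

private lemma iD_monomial (m : ℕ) : ∀ j : ℕ, iteratedDeriv j (fun y : ℝ => y ^ m) =
    fun y => (m.descFactorial j : ℝ) * y ^ (m - j) := by
  intro j
  induction j with
  | zero => funext y; simp
  | succ j IH =>
    funext y
    rw [iteratedDeriv_succ, IH, deriv_const_mul _ (differentiableAt_pow _), deriv_pow_field,
      Nat.descFactorial_succ]
    push_cast
    rw [Nat.sub_sub]
    ring

private lemma vanish {f : ℝ → ℝ} (hf : ContDiff ℝ (⊤ : ℕ∞) f) {n : ℕ} {C : ℝ}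
    (hb : ∀ y : ℝ, |f y| ≤ C * |y| ^ (n + 1)) :
    ∀ j, j ≤ n → iteratedDeriv j f 0 = 0 := by
  intro j
  induction j using Nat.strong_induction_on with
  | _ j IH =>
  intro hjn
  rcases Nat.eq_zero_or_pos j with rfl | hjpos
  · have := hb 0
    simp only [abs_zero, zero_pow (Nat.succ_ne_zero n), mul_zero] at this
    simpa using le_antisymm this (abs_nonneg _)
  obtain ⟨i, rfl⟩ := Nat.exists_eq_succ_of_ne_zero hjpos.ne'
  have key : ∀ ε : ℝ, 0 < ε → |iteratedDeriv (i + 1) f 0| ≤ 2 * ε := by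
    intro ε hε
    have hc : Continuous (iteratedDeriv (i + 1) f) := hf.continuous_iteratedDeriv _ (by exact_mod_cast le_top)
    obtain ⟨r, hr, hrc⟩ := Metric.continuousAt_iff.mp hc.continuousAt ε hε
    set C' : ℝ := max C 1 with hC'def
    have hC' : 0 < C' := lt_of_lt_of_le one_pos (le_max_right _ _)
    have hb' : ∀ y : ℝ, |f y| ≤ C' * |y| ^ (n + 1) := fun y =>
      (hb y).trans (mul_le_mul_of_nonneg_right (le_max_left _ _) (by positivity))
    set D : ℝ := (i + 1).factorial * C' with hDdef
    have hD : 0 < D := by positivity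
    set y0 : ℝ := min (r / 2) (min 1 (ε / D)) with hy0def
    have hy0 : 0 < y0 := by
      apply lt_min (by linarith) (lt_min one_pos (by positivity))
    have hy0r : y0 < r := lt_of_le_of_lt (min_le_left _ _) (by linarith)
    have hy01 : y0 ≤ 1 := (min_le_right _ _).trans (min_le_left _ _)
    have hy0ε : y0 ≤ ε / D := (min_le_right _ _).trans (min_le_right _ _)
    have hUD : UniqueDiffOn ℝ (Icc (0:ℝ) y0) := uniqueDiffOn_Icc hy0
    have hfc : ContDiffOn ℝ i f (Icc 0 y0) := (hf.of_le (by exact_mod_cast le_top)).contDiffOn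
    have hdiff : DifferentiableOn ℝ (iteratedDerivWithin i f (Icc 0 y0)) (Ioo 0 y0) := by
      exact ((hf.differentiable_iteratedDeriv i (by exact_mod_cast (WithTop.coe_lt_coe.mpr (ENat.coe_lt_top i)))).differentiableOn).congr
        (fun x hx => iDW_eq_iD hf hUD i (Ioo_subset_Icc_self hx))
    obtain ⟨x', hx', hT⟩ := taylor_mean_remainder_lagrange (x₀ := 0) (x := y0) hy0.ne
      (by rwa [Set.uIcc_of_le hy0.le]) (by rwa [Set.uIcc_of_le hy0.le, Set.uIoo_of_le hy0.le])
    rw [Set.uIcc_of_le hy0.le] at hT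
    rw [Set.uIoo_of_le hy0.le] at hx'
    have hTP : taylorWithinEval f i (Icc 0 y0) 0 y0 = 0 := by
      rw [taylor_within_apply]
      apply Finset.sum_eq_zero
      intro l hl
      rw [iDW_eq_iD hf hUD l (left_mem_Icc.mpr hy0.le),
        IH l (Finset.mem_range.mp hl)
          (le_trans (Nat.lt_succ_iff.mp (Finset.mem_range.mp hl)) (Nat.le_of_succ_le hjn)),
        smul_zero]
    rw [hTP, sub_zero, iDW_eq_iD hf hUD (i+1) (Ioo_subset_Icc_self hx')] at hT
    have hx'pos : 0 < x' := hx'.1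
    have hx'lt : x' < y0 := hx'.2
    have hy0j : (0:ℝ) < y0 ^ (i+1) := pow_pos hy0 _
    have hfac : (0:ℝ) < ((i+1).factorial : ℝ) := by positivity
    have hiD_x' : iteratedDeriv (i+1) f x' = f y0 * ((i+1).factorial : ℝ) / y0 ^ (i+1) := by
      field_simp at hT ⊢
      rw [sub_zero] at hT
      linarith [hT]
    have hbnd : |iteratedDeriv (i+1) f x'| ≤ D * y0 ^ (n + 1 - (i+1)) := by
      rw [hiD_x', abs_div, abs_mul, abs_pow, abs_of_pos hy0, abs_of_pos hfac,
        div_le_iff₀ hy0j]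
      have h1 : |f y0| ≤ C' * y0 ^ (n+1) := by
        have := hb' y0; rwa [abs_of_pos hy0] at this
      have h2 : y0 ^ (n+1) = y0 ^ (n + 1 - (i+1)) * y0 ^ (i+1) := by
        rw [← pow_add]
        congr 1
        omega
      calc |f y0| * ((i+1).factorial : ℝ) ≤ (C' * y0 ^ (n+1)) * ((i+1).factorial : ℝ) :=
            mul_le_mul_of_nonneg_right h1 hfac.le
        _ = D * y0 ^ (n + 1 - (i+1)) * y0 ^ (i+1) := by rw [h2, hDdef]; ring
    have hexp : 1 ≤ n + 1 - (i + 1) := by omega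
    have hpow : y0 ^ (n + 1 - (i+1)) ≤ y0 := by
      calc y0 ^ (n + 1 - (i+1)) ≤ y0 ^ 1 := pow_le_pow_of_le_one hy0.le hy01 hexp
        _ = y0 := pow_one _
    have hbnd2 : |iteratedDeriv (i+1) f x'| ≤ ε := by
      calc |iteratedDeriv (i+1) f x'| ≤ D * y0 ^ (n + 1 - (i+1)) := hbnd
        _ ≤ D * y0 := mul_le_mul_of_nonneg_left hpow hD.le
        _ ≤ D * (ε / D) := mul_le_mul_of_nonneg_left hy0ε hD.le
        _ = ε := by field_simp
    have hcont : |iteratedDeriv (i+1) f 0 - iteratedDeriv (i+1) f x'| < ε := by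
      have : dist x' 0 < r := by
        rw [Real.dist_eq, sub_zero, abs_of_pos hx'pos]; linarith
      have := hrc this
      rw [Real.dist_eq] at this
      rw [abs_sub_comm]
      exact this
    calc |iteratedDeriv (i+1) f 0|
        ≤ |iteratedDeriv (i+1) f 0 - iteratedDeriv (i+1) f x'| + |iteratedDeriv (i+1) f x'| := by
          have h4 := abs_add_le (iteratedDeriv (i+1) f 0 - iteratedDeriv (i+1) f x')
            (iteratedDeriv (i+1) f x')
          simpa using h4
      _ ≤ ε + ε := add_le_add hcont.le hbnd2
      _ = 2 * ε := by ring
  by_contra h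
  have h2 := key (|iteratedDeriv (i+1) f 0| / 4) (by positivity)
  have h3 : 0 < |iteratedDeriv (i+1) f 0| := abs_pos.mpr h
  linarith

/-- Fix an integer `k ≥ 1` and `h₁ > 0`, and let `U` be the `k`-th smooth
self-similar Burgers profile (the smooth, odd, strictly decreasing inverse of
`u ↦ -u - h₁ u^(2k+1)`). Then `U(0) = 0`, `U'(0) = -1`, the iterated derivatives
`∂_y^j U(0) = 0` for `2 ≤ j ≤ 2k` and for `2k+2 ≤ j ≤ 4k`, and
`∂_y^(2k+1) U(0) = (2k+1)!·h₁`. In particular, with the normalization `h₁ = 1/(2k+1)`,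
one has `∂_y^(2k+1) U(0) = (2k)!` and there exist `C > 0`, `δ > 0` such that
`|U(y) + y - y^(2k+1)/(2k+1)| ≤ C·|y|^(4k+1)` for all `|y| ≤ δ`. -/
theorem burgers_profile_taylor_at_zero (k : ℕ) (hk : 1 ≤ k) (h₁ : ℝ) (hh₁ : 0 < h₁)
    (U : ℝ → ℝ) (hsmooth : ContDiff ℝ (⊤ : ℕ∞) U) (hodd : ∀ y : ℝ, U (-y) = -U y)
    (hanti : StrictAnti U)
    (hinv : ∀ y : ℝ, y = -U y - h₁ * (U y) ^ (2 * k + 1)) :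
    U 0 = 0 ∧
    deriv U 0 = -1 ∧
    (∀ j : ℕ, 2 ≤ j → j ≤ 2 * k → iteratedDeriv j U 0 = 0) ∧
    (∀ j : ℕ, 2 * k + 2 ≤ j → j ≤ 4 * k → iteratedDeriv j U 0 = 0) ∧
    iteratedDeriv (2 * k + 1) U 0 = (Nat.factorial (2 * k + 1) : ℝ) * h₁ ∧
    (h₁ = 1 / (2 * (k : ℝ) + 1) →
      iteratedDeriv (2 * k + 1) U 0 = (Nat.factorial (2 * k) : ℝ)) ∧
    (h₁ = 1 / (2 * (k : ℝ) + 1) →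
      ∃ C > (0 : ℝ), ∃ δ > (0 : ℝ), ∀ y : ℝ, |y| ≤ δ →
        |U y + y - y ^ (2 * k + 1) / (2 * (k : ℝ) + 1)| ≤ C * |y| ^ (4 * k + 1)) := by
  -- `U 0 = 0`
  have hU0 : U 0 = 0 := by
    have h := hodd 0
    rw [neg_zero] at h
    linarith
  -- `|U y| ≤ |y|`
  have habs : ∀ y : ℝ, |U y| ≤ |y| := by
    intro y
    have hsq : (0:ℝ) ≤ (U y) ^ (2*k) := by
      rw [pow_mul]; positivity
    have h2 : y = -(U y * (1 + h₁ * (U y)^(2*k))) := by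
      calc y = -U y - h₁ * (U y) ^ (2*k+1) := hinv y
        _ = -(U y * (1 + h₁ * (U y)^(2*k))) := by ring
    have h1 : |y| = |U y| * (1 + h₁ * (U y)^(2*k)) := by
      conv_lhs => rw [h2]
      rw [abs_neg, abs_mul, abs_of_pos (by positivity : (0:ℝ) < 1 + h₁ * (U y)^(2*k))]
    rw [h1]
    exact le_mul_of_one_le_right (abs_nonneg _) (by nlinarith)
  have hUplus : ∀ y : ℝ, U y + y = -(h₁ * (U y) ^ (2*k+1)) := by
    intro y
    have := hinv y
    linarith
  -- the polynomial part and the remainder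
  set Q : ℝ → ℝ := fun y => h₁ * y ^ (2*k+1) with hQdef
  set idf : ℝ → ℝ := fun y => y ^ 1 with hidfdef
  set g : ℝ → ℝ := fun y => U y - (Q y - idf y) with hgdef
  have hQs : ContDiff ℝ (⊤ : ℕ∞) Q := contDiff_const.mul (contDiff_id.pow _)
  have hids : ContDiff ℝ (⊤ : ℕ∞) idf := contDiff_id.pow _
  have hgs : ContDiff ℝ (⊤ : ℕ∞) g := hsmooth.sub (hQs.sub hids)
  have hsum : U = g + (Q - idf) := by
    funext y
    simp only [hgdef, Pi.add_apply, Pi.sub_apply]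
    ring
  -- key estimate on the remainder
  have hgb : ∀ y : ℝ, |g y| ≤ ((2*k+1 : ℕ) : ℝ) * h₁^2 * |y| ^ (4*k + 1) := by
    intro y
    have hneg : (-y) ^ (2*k+1) = -(y ^ (2*k+1)) := Odd.neg_pow ⟨k, by ring⟩ y
    have hkey := geom_sum₂_mul (U y) (-y) (2*k+1)
    have h5 : U y - (-y) = U y + y := by ring
    have hgy : g y =
        -h₁ * ((∑ i ∈ Finset.range (2*k+1), (U y)^i * (-y)^(2*k+1-1-i)) * (U y + y)) := by
      rw [← h5, hkey, hneg]
      simp only [hgdef, hQdef, hidfdef, pow_one]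
      linear_combination hUplus y
    have hsumb : |∑ i ∈ Finset.range (2*k+1), (U y)^i * (-y)^(2*k+1-1-i)|
        ≤ ((2*k+1:ℕ):ℝ) * |y|^(2*k) := by
      calc |∑ i ∈ Finset.range (2*k+1), (U y)^i * (-y)^(2*k+1-1-i)|
          ≤ ∑ i ∈ Finset.range (2*k+1), |(U y)^i * (-y)^(2*k+1-1-i)| :=
            Finset.abs_sum_le_sum_abs _ _
        _ ≤ ∑ _i ∈ Finset.range (2*k+1), |y|^(2*k) := by
            apply Finset.sum_le_sum
            intro i hi
            have hi' : i ≤ 2*k := by have := Finset.mem_range.mp hi; omega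
            have he : 2*k+1-1-i = 2*k-i := by omega
            rw [abs_mul, abs_pow, abs_pow, abs_neg, he]
            calc |U y|^i * |y|^(2*k-i) ≤ |y|^i * |y|^(2*k-i) :=
                  mul_le_mul_of_nonneg_right (pow_le_pow_left₀ (abs_nonneg _) (habs y) i)
                    (by positivity)
              _ = |y|^(2*k) := by rw [← pow_add]; congr 1; omega
        _ = ((2*k+1:ℕ):ℝ) * |y|^(2*k) := by
            rw [Finset.sum_const, Finset.card_range, nsmul_eq_mul]
    have h3 : |U y + y| ≤ h₁ * |y|^(2*k+1) := by
      rw [hUplus y, abs_neg, abs_mul, abs_of_pos hh₁, abs_pow]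
      exact mul_le_mul_of_nonneg_left (pow_le_pow_left₀ (abs_nonneg _) (habs y) _) hh₁.le
    rw [hgy, abs_mul, abs_neg, abs_of_pos hh₁, abs_mul]
    calc h₁ * (|∑ i ∈ Finset.range (2*k+1), (U y)^i * (-y)^(2*k+1-1-i)| * |U y + y|)
        ≤ h₁ * ((((2*k+1:ℕ):ℝ) * |y|^(2*k)) * (h₁ * |y|^(2*k+1))) := by
          apply mul_le_mul_of_nonneg_left _ hh₁.le
          exact mul_le_mul hsumb h3 (abs_nonneg _) (by positivity)
      _ = ((2*k+1 : ℕ) : ℝ) * h₁^2 * |y| ^ (4*k + 1) := by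
          rw [show 4*k+1 = 2*k + (2*k+1) by omega, pow_add]
          ring
  -- iterated derivatives of the remainder vanish up to order 4k
  have hvan : ∀ j, j ≤ 4*k → iteratedDeriv j g 0 = 0 := by
    have := vanish hgs (n := 4*k) (C := ((2*k+1 : ℕ) : ℝ) * h₁^2) hgb
    exact this
  -- splitting of iterated derivatives of U at 0
  have hsplit : ∀ j : ℕ, iteratedDeriv j U 0 =
      iteratedDeriv j g 0 + (h₁ * (((2*k+1).descFactorial j : ℝ) * (0:ℝ)^(2*k+1-j))
        - ((Nat.descFactorial 1 j : ℝ) * (0:ℝ)^(1-j))) := by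
    intro j
    have e1 : iteratedDeriv j U 0 = iteratedDeriv j g 0 + iteratedDeriv j (Q - idf) 0 := by
      conv_lhs => rw [hsum]
      rw [← iteratedDerivWithin_univ, ← iteratedDerivWithin_univ, ← iteratedDerivWithin_univ]
      exact iteratedDerivWithin_add (Set.mem_univ (0:ℝ)) uniqueDiffOn_univ
        (hgs.of_le (by exact_mod_cast le_top)).contDiffWithinAt ((hQs.sub hids).of_le (by exact_mod_cast le_top)).contDiffWithinAt
    have e2 : iteratedDeriv j (Q - idf) 0 = iteratedDeriv j Q 0 - iteratedDeriv j idf 0 := by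
      rw [← iteratedDerivWithin_univ, ← iteratedDerivWithin_univ, ← iteratedDerivWithin_univ]
      exact iteratedDerivWithin_sub (Set.mem_univ (0:ℝ)) uniqueDiffOn_univ
        (hQs.of_le (by exact_mod_cast le_top)).contDiffWithinAt (hids.of_le (by exact_mod_cast le_top)).contDiffWithinAt
    have e3 : iteratedDeriv j Q 0 = h₁ * (((2*k+1).descFactorial j : ℝ) * (0:ℝ)^(2*k+1-j)) := by
      have hc : iteratedDeriv j Q 0 = h₁ * iteratedDeriv j (fun y:ℝ => y^(2*k+1)) 0 := by
        rw [← iteratedDerivWithin_univ, ← iteratedDerivWithin_univ]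
        exact iteratedDerivWithin_const_mul (Set.mem_univ (0:ℝ)) uniqueDiffOn_univ h₁
          (((contDiff_id.pow _) : ContDiff ℝ j _).contDiffWithinAt)
      rw [hc, iD_monomial]
    have e4 : iteratedDeriv j idf 0 = (Nat.descFactorial 1 j : ℝ) * (0:ℝ)^(1-j) := by
      rw [hidfdef, iD_monomial 1 j]
    rw [e1, e2, e3, e4]
  refine ⟨hU0, ?_, ?_, ?_, ?_, ?_, ?_⟩
  · -- deriv U 0 = -1
    have h := hsplit 1
    rw [hvan 1 (by omega)] at h
    have hz : (0:ℝ)^(2*k+1-1) = 0 := by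
      apply zero_pow; omega
    rw [hz] at h
    norm_num at h
    exact h
  · -- 2 ≤ j ≤ 2k
    intro j hj2 hj2k
    have h := hsplit j
    rw [hvan j (by omega)] at h
    have hz : (0:ℝ)^(2*k+1-j) = 0 := by apply zero_pow; omega
    have hd : Nat.descFactorial 1 j = 0 := Nat.descFactorial_eq_zero_iff_lt.mpr (by omega)
    rw [hz, hd] at h
    norm_num at h
    exact h
  · -- 2k+2 ≤ j ≤ 4k
    intro j hjl hju
    have h := hsplit j
    rw [hvan j (by omega)] at h
    have hd1 : (2*k+1).descFactorial j = 0 := Nat.descFactorial_eq_zero_iff_lt.mpr (by omega)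
    have hd : Nat.descFactorial 1 j = 0 := Nat.descFactorial_eq_zero_iff_lt.mpr (by omega)
    rw [hd1, hd] at h
    norm_num at h
    exact h
  · -- j = 2k+1
    have h := hsplit (2*k+1)
    rw [hvan (2*k+1) (by omega)] at h
    have hz : 2*k+1 - (2*k+1) = 0 := by omega
    have hd : Nat.descFactorial 1 (2*k+1) = 0 :=
      Nat.descFactorial_eq_zero_iff_lt.mpr (by omega)
    rw [hz, hd, Nat.descFactorial_self] at h
    norm_num at h
    rw [h]
    ring
  · -- normalization
    intro hnorm
    have h := hsplit (2*k+1)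
    rw [hvan (2*k+1) (by omega)] at h
    have hz : 2*k+1 - (2*k+1) = 0 := by omega
    have hd : Nat.descFactorial 1 (2*k+1) = 0 :=
      Nat.descFactorial_eq_zero_iff_lt.mpr (by omega)
    rw [hz, hd, Nat.descFactorial_self] at h
    norm_num at h
    rw [h, hnorm, Nat.factorial_succ]
    push_cast
    have h2 : (2:ℝ)*k + 1 ≠ 0 := by positivity
    field_simp
  · -- quantitative bound
    intro hnorm
    refine ⟨((2*k+1 : ℕ) : ℝ) * h₁^2, by positivity, 1, one_pos, ?_⟩
    intro y _
    have hb := hgb y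
    have heq : U y + y - y ^ (2*k+1) / (2*(k:ℝ)+1) = g y := by
      simp only [hgdef, hQdef, hidfdef, pow_one]
      rw [hnorm]
      push_cast
      ring
    rw [heq]
    exact hb
end

section
/- The k-th smooth self-similar Burgers profile 𝔘 has the asymptotic expansion 𝔘(y) = -h₁^{-1/(2k+1)}·y^{1/(2k+1)}·(1 + O(y^{-2k/(2k+1)})) as y → +∞; precisely, there exist constants C > 0 and y₁ ≥ 1 such that for all y ≥ y₁, |𝔘(y) + h₁^{-1/(2k+1)}·y^{1/(2k+1)}| ≤ C·y^{-(2k-1)/(2k+1)}. By oddness of 𝔘 the symmetric expansion holds as y → -∞. -/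
/-- Fix an integer `k ≥ 1` and `h₁ > 0`, and let `U` be the `k`-th smooth
self-similar Burgers profile (the smooth, odd, strictly decreasing inverse of
`u ↦ -u - h₁ u^(2k+1)`). Then `U` has the asymptotic expansion
`U(y) = -h₁^{-1/(2k+1)} y^{1/(2k+1)} (1 + O(y^{-2k/(2k+1)}))` as `y → +∞`; precisely,
there exist `C > 0` and `y₁ ≥ 1` such that for all `y ≥ y₁`,
`|U(y) + h₁^{-1/(2k+1)} y^{1/(2k+1)}| ≤ C·y^{-(2k-1)/(2k+1)}`, and by oddness the
symmetric expansion holds as `y → -∞`. -/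
theorem burgers_profile_asymptotics (k : ℕ) (hk : 1 ≤ k) (h₁ : ℝ) (hh₁ : 0 < h₁)
    (U : ℝ → ℝ) (hsmooth : ContDiff ℝ (⊤ : ℕ∞) U) (hodd : ∀ y : ℝ, U (-y) = -U y)
    (hanti : StrictAnti U)
    (hinv : ∀ y : ℝ, y = -U y - h₁ * (U y) ^ (2 * k + 1)) :
    ∃ C > (0 : ℝ), ∃ y₁ : ℝ, 1 ≤ y₁ ∧
      (∀ y : ℝ, y₁ ≤ y →
        |U y + h₁ ^ (-(1 / (2 * (k : ℝ) + 1))) * y ^ (1 / (2 * (k : ℝ) + 1))|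
          ≤ C * y ^ (-(2 * (k : ℝ) - 1) / (2 * (k : ℝ) + 1))) ∧
      (∀ y : ℝ, y ≤ -y₁ →
        |U y - h₁ ^ (-(1 / (2 * (k : ℝ) + 1))) * |y| ^ (1 / (2 * (k : ℝ) + 1))|
          ≤ C * |y| ^ (-(2 * (k : ℝ) - 1) / (2 * (k : ℝ) + 1))) := by
  set nr : ℝ := 2 * (k : ℝ) + 1 with hnrdef
  have hnrpos : (0:ℝ) < nr := by positivity
  set C : ℝ := h₁ ^ (-(2 / nr)) with hC
  have hCpos : 0 < C := Real.rpow_pos_of_pos hh₁ _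
  have hU0 : U 0 = 0 := by
    have h := hodd 0
    rw [neg_zero] at h; linarith
  have key : ∀ y : ℝ, 1 ≤ y →
      |U y + h₁ ^ (-(1 / nr)) * y ^ (1 / nr)| ≤ C * y ^ (-(2 * (k:ℝ) - 1) / nr) := by
    intro y hy
    have hy0 : (0:ℝ) < y := lt_of_lt_of_le one_pos hy
    set u : ℝ := -U y with hu
    have hupos : 0 < u := by
      have : U y < U 0 := hanti hy0
      rw [hU0] at this
      simp only [hu]; linarith
    have hUyu : U y = -u := by rw [hu]; ring
    have heq : y = u + h₁ * u ^ (2*k+1) := by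
      have h := hinv y
      rw [hUyu, Odd.neg_pow ⟨k, rfl⟩] at h
      rw [h]; ring
    set A : ℝ := h₁ ^ (-(1 / nr)) * y ^ (1 / nr) with hA
    have hApos : 0 < A := by
      apply mul_pos (Real.rpow_pos_of_pos hh₁ _) (Real.rpow_pos_of_pos hy0 _)
    have hcast : ((2*k+1 : ℕ) : ℝ) = nr := by push_cast [hnrdef]; ring
    have hAn : h₁ * A ^ (2*k+1) = y := by
      rw [hA, mul_pow, ← Real.rpow_natCast (h₁ ^ (-(1/nr))) (2*k+1),
        ← Real.rpow_natCast (y ^ ((1:ℝ)/nr)) (2*k+1),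
        ← Real.rpow_mul hh₁.le, ← Real.rpow_mul hy0.le, hcast,
        show -(1/nr) * nr = -1 by field_simp,
        show 1/nr * nr = 1 by field_simp,
        Real.rpow_neg_one, Real.rpow_one]
      field_simp
    have hsub : h₁ * (A ^ (2*k+1) - u ^ (2*k+1)) = u := by
      rw [mul_sub, hAn, heq]; ring
    have hpowlt : u ^ (2*k+1) < A ^ (2*k+1) := by nlinarith [hsub, hupos, hh₁]
    have hultA : u < A := lt_of_pow_lt_pow_left₀ (2*k+1) hApos.le hpowlt
    have hgeom := geom_sum₂_mul A u (2*k+1)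
    set S : ℝ := ∑ i ∈ Finset.range (2*k+1), A ^ i * u ^ (2*k+1 - 1 - i) with hS
    have hSge : A ^ (2*k) ≤ S := by
      have hmem : 2*k ∈ Finset.range (2*k+1) := Finset.self_mem_range_succ _
      have h := Finset.single_le_sum (f := fun i => A ^ i * u ^ (2*k+1-1-i))
        (fun i _ => by positivity) hmem
      simpa [hS] using h
    have h2 : (A - u) * (h₁ * A ^ (2*k)) ≤ A := by
      calc (A - u) * (h₁ * A ^ (2*k))
          ≤ (A - u) * (h₁ * S) := by
            apply mul_le_mul_of_nonneg_left
              (mul_le_mul_of_nonneg_left hSge hh₁.le) (by linarith)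
        _ = h₁ * (S * (A - u)) := by ring
        _ = h₁ * (A ^ (2*k+1) - u ^ (2*k+1)) := by rw [hgeom]
        _ = u := hsub
        _ ≤ A := hultA.le
    have hkey : (A - u) * y ≤ A ^ 2 := by
      have hy' : y = (h₁ * A ^ (2*k)) * A := by rw [← hAn]; ring
      calc (A - u) * y = ((A - u) * (h₁ * A ^ (2*k))) * A := by rw [hy']; ring
        _ ≤ A * A := mul_le_mul_of_nonneg_right h2 hApos.le
        _ = A ^ 2 := by ring
    have hAu : A - u ≤ A ^ 2 / y := (le_div_iff₀ hy0).2 hkey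
    have h1pow : (h₁ ^ (-(1/nr) : ℝ)) ^ (2:ℕ) = C := by
      rw [← Real.rpow_natCast (h₁ ^ (-(1/nr))) 2, ← Real.rpow_mul hh₁.le, hC]
      congr 1
      push_cast
      ring
    have h2pow : (y ^ ((1:ℝ)/nr)) ^ (2:ℕ) / y = y ^ (-(2 * (k:ℝ) - 1) / nr) := by
      rw [← Real.rpow_natCast (y ^ ((1:ℝ)/nr)) 2, ← Real.rpow_mul hy0.le,
        show -(2 * (k:ℝ) - 1) / nr = (1:ℝ)/nr * (2:ℕ) - 1 by
          push_cast
          field_simp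
          ring,
        Real.rpow_sub hy0, Real.rpow_one]
    have hA2 : A ^ 2 / y = C * y ^ (-(2 * (k:ℝ) - 1) / nr) := by
      rw [hA, mul_pow, mul_div_assoc, h1pow, h2pow]
    have habs : U y + A = -(A - u) → True := fun _ => trivial
    have : |U y + A| = A - u := by
      rw [hUyu, show -u + A = A - u by ring, abs_of_nonneg (by linarith)]
    rw [this]
    calc A - u ≤ A ^ 2 / y := hAu
      _ = C * y ^ (-(2 * (k:ℝ) - 1) / nr) := hA2
  refine ⟨C, hCpos, 1, le_refl 1, fun y hy => key y hy, fun y hy => ?_⟩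
  have hy1 : 1 ≤ -y := by linarith
  have habs : |y| = -y := abs_of_nonpos (by linarith)
  have hUy : U y = -U (-y) := by
    have h := hodd (-y); rw [neg_neg] at h; linarith
  rw [habs, hUy]
  have h := key (-y) hy1
  calc |-U (-y) - h₁ ^ (-(1/nr)) * (-y) ^ ((1:ℝ)/nr)|
      = |U (-y) + h₁ ^ (-(1/nr)) * (-y) ^ ((1:ℝ)/nr)| := by
        rw [show -U (-y) - h₁ ^ (-(1/nr)) * (-y) ^ ((1:ℝ)/nr)
            = -(U (-y) + h₁ ^ (-(1/nr)) * (-y) ^ ((1:ℝ)/nr)) by ring, abs_neg]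
    _ ≤ C * (-y) ^ (-(2 * (k:ℝ) - 1) / nr) := h
end

section
/- Let n ≥ 1 be an integer, let λ₁, …, λ_n be reals with λ_i ≥ λ_min > 0 for all i, and let D = diag(λ₁, …, λ_n) acting on ℝⁿ. Let 0 < γ < μ and C₁, C₂, C₃ > 0. Then there exists σ* (depending only on λ_min, γ, μ, C₁, C₂, C₃) such that for all σ₀ ≥ σ*, σ₁ ≥ σ₀, and every differentiable curve w : [σ₀, σ₁] → ℝⁿ satisfying w'(s) = D·w(s) + r(s) with |r(s)| ≤ C₁·|w(s)|² + C₂·e^{-γ s}·|w(s)| + C₃·e^{-μ s} for all s, the following outgoing property holds: at every s ∈ [σ₀, σ₁] with (1/2)·e^{-γ s} < |w(s)| ≤ e^{-γ s}, one has (d/ds)|w(s)|² > λ_min·|w(s)|². -/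
open scoped RealInnerProductSpace
open Filter Topology

/-!
Since `d/ds ‖w‖² = 2⟪w, D w + r⟫ ≥ 2 λ_min ‖w‖² - 2 ‖w‖ ‖r‖`, it suffices that
`‖r‖ < (λ_min / 2) ‖w‖`. On the shell `e^{-γs}/2 < ‖w‖ ≤ e^{-γs}` the bound on `‖r‖` is at most
`K(s) ‖w‖` with `K(s) = (C₁ + C₂) e^{-γs} + 2 C₃ e^{-(μ-γ)s}`, using
`e^{-μs} = e^{-(μ-γ)s} e^{-γs} < 2 e^{-(μ-γ)s} ‖w‖`; and `K(s) → 0` as `s → ∞` since `0 < γ < μ`.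
-/

lemma tendsto_exp_neg_mul_atTop {a : ℝ} (ha : 0 < a) :
    Tendsto (fun s => Real.exp (-a * s)) atTop (𝓝 0) := by
  simpa only [Function.comp_def, neg_mul, id] using
    Real.tendsto_exp_neg_atTop_nhds_zero.comp (tendsto_id.const_mul_atTop ha)

lemma mul_norm_sq_sub_le_inner_of_apply_eq {ι : Type*} [Fintype ι] {lam : ι → ℝ}
    {c : ℝ} (hlam : ∀ i, c ≤ lam i) {v u r : EuclideanSpace ℝ ι}
    (hu : ∀ i, u i = lam i * v i + r i) :
    c * ‖v‖ ^ 2 - ‖v‖ * ‖r‖ ≤ ⟪v, u⟫ := by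
  have hdiag : c * ‖v‖ ^ 2 ≤ ∑ i, lam i * v i ^ 2 := by
    rw [EuclideanSpace.real_norm_sq_eq, Finset.mul_sum]
    exact Finset.sum_le_sum fun i _ => mul_le_mul_of_nonneg_right (hlam i) (sq_nonneg _)
  have hsplit : ⟪v, u⟫ = ∑ i, lam i * v i ^ 2 + ⟪v, r⟫ := by
    simp only [PiLp.inner_apply, RCLike.inner_apply, conj_trivial, hu,
      ← Finset.sum_add_distrib]
    exact Finset.sum_congr rfl fun i _ => by ring
  linarith [neg_le_of_abs_le (abs_real_inner_le_norm v r)]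

lemma mul_norm_sq_lt_deriv_norm_sq {ι : Type*} [Fintype ι] {lam : ι → ℝ} {c K s : ℝ}
    (hlam : ∀ i, c ≤ lam i) {w : ℝ → EuclideanSpace ℝ ι} {w' r : EuclideanSpace ℝ ι}
    (hw : HasDerivAt w w' s) (hw' : ∀ i, w' i = lam i * w s i + r i) (hwpos : 0 < ‖w s‖)
    (hr : ‖r‖ ≤ K * ‖w s‖) (hK : K < c / 2) :
    c * ‖w s‖ ^ 2 < deriv (fun t => ‖w t‖ ^ 2) s := by
  rw [hw.norm_sq.deriv]
  have hinner := mul_norm_sq_sub_le_inner_of_apply_eq hlam hw'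
  nlinarith [mul_le_mul_of_nonneg_left hr hwpos.le, mul_pos hwpos hwpos]

lemma forcing_le_of_half_lt_of_le {C₁ C₂ C₃ E F x : ℝ} (hC₁ : 0 ≤ C₁) (hC₃ : 0 ≤ C₃)
    (hF : 0 ≤ F) (hlow : 1 / 2 * E < x) (hup : x ≤ E) :
    C₁ * x ^ 2 + C₂ * E * x + C₃ * (F * E) ≤ ((C₁ + C₂) * E + 2 * C₃ * F) * x := by
  have hx : 0 ≤ x := le_trans (by linarith) hlow.le
  nlinarith [mul_le_mul_of_nonneg_left hup (mul_nonneg hC₁ hx), mul_nonneg hC₃ hF]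

theorem outgoing_property_general (n : ℕ) (lam : Fin n → ℝ) (lammin : ℝ)
    (hlammin : 0 < lammin) (hlam : ∀ i, lammin ≤ lam i)
    (γ μ C₁ C₂ C₃ : ℝ) (hγ : 0 < γ) (hγμ : γ < μ)
    (hC₁ : 0 < C₁) (hC₃ : 0 < C₃) :
    ∃ σstar : ℝ, ∀ σ₀ σ₁ : ℝ, σstar ≤ σ₀ → σ₀ ≤ σ₁ →
      ∀ w w' r : ℝ → EuclideanSpace ℝ (Fin n),
        (∀ s ∈ Set.Icc σ₀ σ₁, HasDerivAt w (w' s) s) →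
        (∀ s ∈ Set.Icc σ₀ σ₁, ∀ i : Fin n, w' s i = lam i * w s i + r s i) →
        (∀ s ∈ Set.Icc σ₀ σ₁,
          ‖r s‖ ≤ C₁ * ‖w s‖ ^ 2 + C₂ * Real.exp (-γ * s) * ‖w s‖
            + C₃ * Real.exp (-μ * s)) →
        ∀ s ∈ Set.Icc σ₀ σ₁,
          (1 / 2 : ℝ) * Real.exp (-γ * s) < ‖w s‖ → ‖w s‖ ≤ Real.exp (-γ * s) →
          lammin * ‖w s‖ ^ 2 < deriv (fun t => ‖w t‖ ^ 2) s := by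
  set K : ℝ → ℝ := fun s =>
    (C₁ + C₂) * Real.exp (-γ * s) + 2 * C₃ * Real.exp (-(μ - γ) * s)
  have hK : Tendsto K atTop (𝓝 0) := by
    simpa only [mul_zero, add_zero] using
      ((tendsto_exp_neg_mul_atTop hγ).const_mul (C₁ + C₂)).add
      ((tendsto_exp_neg_mul_atTop (sub_pos.2 hγμ)).const_mul (2 * C₃))
  obtain ⟨σstar, hσstar⟩ :=
    eventually_atTop.1 (hK.eventually (eventually_lt_nhds (half_pos hlammin)))
  refine ⟨σstar, fun σ₀ σ₁ hσ₀ _ w w' r hw hw' hr s hs hlow hup => ?_⟩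
  have hexp : Real.exp (-μ * s) = Real.exp (-(μ - γ) * s) * Real.exp (-γ * s) := by
    rw [← Real.exp_add]; ring_nf
  refine mul_norm_sq_lt_deriv_norm_sq hlam (hw s hs) (hw' s hs)
    (lt_of_le_of_lt (by positivity) hlow) ?_ (hσstar s (hσ₀.trans hs.1))
  calc ‖r s‖ ≤ _ := hr s hs
    _ ≤ K s * ‖w s‖ := by
      rw [hexp]
      exact forcing_le_of_half_lt_of_le hC₁.le hC₃.le (Real.exp_pos _).le hlow hup

/-- Let `n ≥ 1`, let `λ₁, …, λ_n` be reals with `λ_i ≥ λ_min > 0`, and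
let `D = diag(λ₁, …, λ_n)` act on `ℝⁿ` (with the Euclidean norm). Let `0 < γ < μ` and
`C₁, C₂, C₃ > 0`. Then there exists `σ*` (depending only on `λ_min, γ, μ, C₁, C₂, C₃`)
such that for all `σ₀ ≥ σ*`, `σ₁ ≥ σ₀`, and every differentiable curve
`w : [σ₀,σ₁] → ℝⁿ` with `w' = D w + r` and
`|r(s)| ≤ C₁|w(s)|² + C₂ e^{-γs}|w(s)| + C₃ e^{-μs}`, the outgoing property holds: at
every `s ∈ [σ₀,σ₁]` with `(1/2)e^{-γs} < |w(s)| ≤ e^{-γs}`, one has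
`(d/ds)|w(s)|² > λ_min |w(s)|²`. -/
theorem outgoing_property (n : ℕ) (hn : 1 ≤ n) (lam : Fin n → ℝ) (lammin : ℝ)
    (hlammin : 0 < lammin) (hlam : ∀ i, lammin ≤ lam i)
    (γ μ C₁ C₂ C₃ : ℝ) (hγ : 0 < γ) (hγμ : γ < μ)
    (hC₁ : 0 < C₁) (hC₂ : 0 < C₂) (hC₃ : 0 < C₃) :
    ∃ σstar : ℝ, ∀ σ₀ σ₁ : ℝ, σstar ≤ σ₀ → σ₀ ≤ σ₁ →
      ∀ w w' r : ℝ → EuclideanSpace ℝ (Fin n),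
        (∀ s ∈ Set.Icc σ₀ σ₁, HasDerivAt w (w' s) s) →
        (∀ s ∈ Set.Icc σ₀ σ₁, ∀ i : Fin n, w' s i = lam i * w s i + r s i) →
        (∀ s ∈ Set.Icc σ₀ σ₁,
          ‖r s‖ ≤ C₁ * ‖w s‖ ^ 2 + C₂ * Real.exp (-γ * s) * ‖w s‖
            + C₃ * Real.exp (-μ * s)) →
        ∀ s ∈ Set.Icc σ₀ σ₁,
          (1 / 2 : ℝ) * Real.exp (-γ * s) < ‖w s‖ → ‖w s‖ ≤ Real.exp (-γ * s) →
          lammin * ‖w s‖ ^ 2 < deriv (fun t => ‖w t‖ ^ 2) s :=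
  outgoing_property_general n lam lammin hlammin hlam γ μ C₁ C₂ C₃ hγ hγμ hC₁ hC₃
end

section
/- Let k ≥ 1 be an integer, b = (2k+1)/(2k), and let 0 < y₀ ≤ 1/(8k). Let U : ℝ → ℝ be differentiable with U(0) = 0, |U'(y)| ≤ 1 + 2y₀ for all y, and |U'(y)| ≤ 1 - y₀^{2k}/4 for all |y| ≥ y₀. Then for every real c with |c - 1| ≤ 1/(8k), the flow field b·y + c·U(y) is repulsive away from the origin: (b·y + c·U(y))·y > 0 for all y with |y| > y₀. -/
/-- Let `k ≥ 1`, `b = (2k+1)/(2k)`, and `0 < y₀ ≤ 1/(8k)`. Let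
`U : ℝ → ℝ` be differentiable with `U(0) = 0`, `|U'(y)| ≤ 1 + 2y₀` for all `y`, and
`|U'(y)| ≤ 1 - y₀^{2k}/4` for all `|y| ≥ y₀`. Then for every real `c` with
`|c - 1| ≤ 1/(8k)`, the flow field `b·y + c·U(y)` is repulsive away from the origin:
`(b·y + c·U(y))·y > 0` for all `|y| > y₀`. -/
theorem repulsive_flow (k : ℕ) (hk : 1 ≤ k) (y₀ : ℝ) (hy₀ : 0 < y₀)
    (hy₀' : y₀ ≤ 1 / (8 * (k : ℝ))) (U : ℝ → ℝ) (hU : Differentiable ℝ U)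
    (hU0 : U 0 = 0)
    (hd1 : ∀ y : ℝ, |deriv U y| ≤ 1 + 2 * y₀)
    (hd2 : ∀ y : ℝ, y₀ ≤ |y| → |deriv U y| ≤ 1 - y₀ ^ (2 * k) / 4) :
    ∀ c : ℝ, |c - 1| ≤ 1 / (8 * (k : ℝ)) →
      ∀ y : ℝ, y₀ < |y| →
        0 < ((2 * (k : ℝ) + 1) / (2 * (k : ℝ)) * y + c * U y) * y := by
  intro c hc y hy
  have hk1 : (1 : ℝ) ≤ (k : ℝ) := by exact_mod_cast hk
  have hk0 : (0 : ℝ) < (k : ℝ) := by linarith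
  -- |U y| ≤ (1 + 2 y₀) |y|
  have hMVT : |U y - U 0| ≤ (1 + 2 * y₀) * |y - 0| := by
    have := Convex.norm_image_sub_le_of_norm_deriv_le
      (f := U) (s := Set.univ) (fun x _ => hU x) (fun x _ => hd1 x)
      convex_univ (Set.mem_univ 0) (Set.mem_univ y)
    simpa using this
  have hUy : |U y| ≤ (1 + 2 * y₀) * |y| := by simpa [hU0] using hMVT
  have hcabs : |c - 1| ≤ 1 / (8 * (k : ℝ)) := hc
  have hcub : c ≤ 1 + 1 / (8 * (k : ℝ)) := by
    have := abs_le.mp hcabs; linarith [this.2]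
  have hclb : 1 - 1 / (8 * (k : ℝ)) ≤ c := by
    have := abs_le.mp hcabs; linarith [this.1]
  have h8k : (0 : ℝ) < 8 * (k : ℝ) := by linarith
  have hinv : 1 / (8 * (k : ℝ)) ≤ 1 / 8 := by
    apply div_le_div_of_nonneg_left (by norm_num) (by norm_num)
    linarith
  have hcpos : (0 : ℝ) < c := by linarith
  -- key coefficient bound : b > c * (1 + 2 y₀)
  have hb : c * (1 + 2 * y₀) < (2 * (k : ℝ) + 1) / (2 * (k : ℝ)) := by
    have h1 : c * (1 + 2 * y₀) ≤ (1 + 1 / (8 * (k : ℝ))) * (1 + 2 * (1 / (8 * (k : ℝ)))) := by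
      apply mul_le_mul hcub (by linarith) (by linarith) (by positivity)
    have h2 : (1 + 1 / (8 * (k : ℝ))) * (1 + 2 * (1 / (8 * (k : ℝ)))) <
        (2 * (k : ℝ) + 1) / (2 * (k : ℝ)) := by
      rw [lt_div_iff₀ (by linarith : (0:ℝ) < 2 * (k:ℝ))]
      have ht : (1 / (8 * (k : ℝ))) * (8 * (k : ℝ)) = 1 := by field_simp
      have htpos : (0:ℝ) < 1 / (8 * (k : ℝ)) := by positivity
      nlinarith [ht, hinv, htpos]
    calc c * (1 + 2 * y₀) ≤ _ := h1
      _ < _ := h2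
  have hy0 : y ≠ 0 := by
    intro h; rw [h] at hy; simp at hy; linarith
  have hysq : 0 < y ^ 2 := by positivity
  have hUyy : c * U y * y ≥ -(c * (1 + 2 * y₀) * y ^ 2) := by
    have h1 : U y * y ≥ -(|U y| * |y|) := by
      have := neg_abs_le (U y * y)
      rw [abs_mul] at this; linarith
    have h2 : |U y| * |y| ≤ (1 + 2 * y₀) * |y| * |y| := by
      apply mul_le_mul_of_nonneg_right hUy (abs_nonneg y)
    have h3 : (1 + 2 * y₀) * |y| * |y| = (1 + 2 * y₀) * y ^ 2 := by
      rw [mul_assoc, ← abs_mul, ← sq, abs_sq]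
    nlinarith [abs_nonneg (U y)]
  nlinarith [hysq, hb, hUyy]
end

section
/- Let 0 < δ < 1/2 and let v : [σ₀, σ₁] → ℝ be differentiable, satisfying the perturbed Riccati equation v'(s) = -v(s)·(1 + v(s)) + E(s) for all s ∈ [σ₀, σ₁], where E is integrable with ∫_{σ₀}^{σ₁} |E(s)| ds ≤ δ/8. If -1 + δ ≤ v(s) ≤ -1/2 for all s ∈ [σ₀, σ₁], then σ₁ - σ₀ ≤ 2/δ; i.e., a trajectory trapped in the band [-1+δ, -1/2] must exit it within time 2/δ. -/
open MeasureTheory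

/-- Let `0 < δ < 1/2` and let `v : [σ₀,σ₁] → ℝ` be differentiable,
satisfying the perturbed Riccati equation `v' = -v(1+v) + E` on `[σ₀,σ₁]`, where `E` is
integrable with `∫_{σ₀}^{σ₁} |E| ≤ δ/8`. If `-1+δ ≤ v(s) ≤ -1/2` for all `s ∈ [σ₀,σ₁]`,
then `σ₁ - σ₀ ≤ 2/δ`: a trajectory trapped in the band `[-1+δ, -1/2]` must exit it
within time `2/δ`. -/
theorem riccati_band_exit (σ₀ σ₁ : ℝ) (hσ : σ₀ ≤ σ₁) (δ : ℝ) (hδ0 : 0 < δ)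
    (hδ1 : δ < 1 / 2) (v E : ℝ → ℝ)
    (hv : ∀ s ∈ Set.Icc σ₀ σ₁, HasDerivAt v (-(v s) * (1 + v s) + E s) s)
    (hE : IntegrableOn E (Set.Icc σ₀ σ₁))
    (hEbd : (∫ s in σ₀..σ₁, |E s|) ≤ δ / 8)
    (hband : ∀ s ∈ Set.Icc σ₀ σ₁, -1 + δ ≤ v s ∧ v s ≤ -(1 / 2)) :
    σ₁ - σ₀ ≤ 2 / δ := by
  have hvc : ContinuousOn v (Set.Icc σ₀ σ₁) := fun s hs =>
    (hv s hs).continuousAt.continuousWithinAt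
  have hEi : IntervalIntegrable E volume σ₀ σ₁ :=
    (intervalIntegrable_iff_integrableOn_Icc_of_le hσ).mpr hE
  have hEabs : IntervalIntegrable (fun s => |E s|) volume σ₀ σ₁ := hEi.abs
  have hfc : IntervalIntegrable (fun s => -(v s) * (1 + v s)) volume σ₀ σ₁ := by
    apply ContinuousOn.intervalIntegrable
    rw [Set.uIcc_of_le hσ]
    exact hvc.neg.mul (continuousOn_const.add hvc)
  have hfi : IntervalIntegrable (fun s => -(v s) * (1 + v s) + E s) volume σ₀ σ₁ :=
    hfc.add hEi
  have key : (∫ s in σ₀..σ₁, (-(v s) * (1 + v s) + E s)) = v σ₁ - v σ₀ :=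
    intervalIntegral.integral_eq_sub_of_hasDerivAt
      (fun s hs => hv s (by rwa [Set.uIcc_of_le hσ] at hs)) hfi
  have hmono : (∫ s in σ₀..σ₁, (δ / 2 - |E s|)) ≤
      ∫ s in σ₀..σ₁, (-(v s) * (1 + v s) + E s) := by
    apply intervalIntegral.integral_mono_on hσ (intervalIntegrable_const.sub hEabs) hfi
    intro s hs
    obtain ⟨h1, h2⟩ := hband s hs
    have hE' : -|E s| ≤ E s := neg_abs_le _
    nlinarith [abs_nonneg (E s)]
  have hcalc : (∫ s in σ₀..σ₁, (δ / 2 - |E s|)) =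
      δ / 2 * (σ₁ - σ₀) - ∫ s in σ₀..σ₁, |E s| := by
    rw [intervalIntegral.integral_sub intervalIntegrable_const hEabs,
      intervalIntegral.integral_const, smul_eq_mul]
    ring
  have h0 : σ₀ ∈ Set.Icc σ₀ σ₁ := ⟨le_refl _, hσ⟩
  have h1 : σ₁ ∈ Set.Icc σ₀ σ₁ := ⟨hσ, le_refl _⟩
  have hb0 := hband σ₀ h0
  have hb1 := hband σ₁ h1
  rw [le_div_iff₀ hδ0]
  nlinarith [hmono.trans_eq key, hcalc]
end
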